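/- If a graph G has a homomorphism from its complement to the complement of H, then for every d the Shannon capacity style inequality α(G^d) ≤ α(H^d) holds, and hence Θ(G) ≤ Θ(H). -/

import Mathlib

/-- Circular distance between two elements of `ZMod n`. -/
def cyclicDist (n : ℕ) (a b : ZMod n) : ℕ := min (a - b).val (b - a).val

/-- The circular graph `C_{k,n}` on `ZMod n`: distinct vertices are adjacent
iff their circular distance is strictly less than `k`. -/
def circularGraph (k n : ℕ) : SimpleGraph (ZMod n) where
  Adj u v := u ≠ v ∧ cyclicDist n u v < k
  symm := by
    constructor
    rintro u v ⟨h1, h2⟩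
    exact ⟨h1.symm, by simpa [cyclicDist, min_comm] using h2⟩
  loopless := by constructor; rintro u ⟨h, _⟩; exact h rfl

/-- The `d`-th strong product power of a graph. -/
def strongPower {V : Type*} (G : SimpleGraph V) (d : ℕ) : SimpleGraph (Fin d → V) where
  Adj x y := x ≠ y ∧ ∀ i, x i = y i ∨ G.Adj (x i) (y i)
  symm := by
    constructor
    rintro x y ⟨h1, h2⟩
    exact ⟨h1.symm, fun i => (h2 i).imp Eq.symm (fun h => G.adj_symm h)⟩
  loopless := by constructor; rintro x ⟨h, _⟩; exact h rfl

/-- A set of vertices is independent if no two of its elements are adjacent. -/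
def IsIndep {V : Type*} (G : SimpleGraph V) (s : Set V) : Prop :=
  ∀ u ∈ s, ∀ v ∈ s, u ≠ v → ¬ G.Adj u v

/-- The independence number of a graph on a finite vertex set. -/
noncomputable def alpha {V : Type*} [Fintype V] (G : SimpleGraph V) : ℕ :=
  sSup {m | ∃ s : Finset V, IsIndep G ↑s ∧ s.card = m}

/-- The Shannon capacity of a graph. -/
noncomputable def shannonCapacity {V : Type*} [Fintype V] (G : SimpleGraph V) : ℝ :=
  ⨆ d : ℕ+, (alpha (strongPower G d) : ℝ) ^ ((1 : ℝ) / (d : ℝ))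

/-!
Independent sets of `G` are cliques of `Gᶜ`, and a graph homomorphism is injective on cliques
and maps them to cliques, so `Gᶜ →g Hᶜ` gives `α(G) ≤ α(H)`. Applied coordinatewise, such a
homomorphism is again one between the complements of the strong powers, because two distinct
tuples are non-adjacent in `G^d` exactly when some coordinate pair is distinct and non-adjacent.
Taking `d`-th roots and suprema gives `Θ(G) ≤ Θ(H)`; the supremum for `H` is bounded by `|W|`.
-/

open Finset

namespace SimpleGraph

variable {α β : Type*} {G : SimpleGraph α} {H : SimpleGraph β}

theorem Hom.injOn_of_isClique (f : G →g H) {s : Set α} (hs : G.IsClique s) : Set.InjOn f s :=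
  fun _ ha _ hb hab => by_contra fun hne => (f.map_adj (hs ha hb hne)).ne hab

theorem IsClique.image_hom (f : G →g H) {s : Set α} (hs : G.IsClique s) :
    H.IsClique (f '' s) := by
  rintro _ ⟨a, ha, rfl⟩ _ ⟨b, hb, rfl⟩ hne
  exact f.map_adj (hs ha hb fun hab => hne (congrArg f hab))

theorem cliqueNum_le_of_hom [Finite β] (f : G →g H) : G.cliqueNum ≤ H.cliqueNum := by
  classical
  obtain ⟨s, hs⟩ := G.exists_isNClique_cliqueNum
  have hclique : H.IsClique (s.image f : Set β) := by
    simpa only [coe_image] using hs.isClique.image_hom f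
  calc G.cliqueNum = #(s.image f) := by
        rw [card_image_of_injOn (f.injOn_of_isClique hs.isClique), hs.card_eq]
    _ ≤ H.cliqueNum := hclique.card_le_cliqueNum

theorem indepNum_le_of_compl_hom [Finite β] (f : Gᶜ →g Hᶜ) : G.indepNum ≤ H.indepNum := by
  simpa only [cliqueNum_compl] using cliqueNum_le_of_hom f

theorem indepNum_le_card [Fintype α] : G.indepNum ≤ Fintype.card α := by
  obtain ⟨s, hs⟩ := G.exists_isNIndepSet_indepNum
  exact hs.card_eq ▸ s.card_le_univ

end SimpleGraph

theorem alpha_eq_indepNum {V : Type*} [Fintype V] (G : SimpleGraph V) : alpha G = G.indepNum := by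
  simp only [alpha, SimpleGraph.indepNum, SimpleGraph.isNIndepSet_iff]
  rfl

theorem strongPower_compl_adj_iff {V : Type*} (G : SimpleGraph V) {d : ℕ} {x y : Fin d → V} :
    (strongPower G d)ᶜ.Adj x y ↔ ∃ i, Gᶜ.Adj (x i) (y i) := by
  simp only [SimpleGraph.compl_adj, strongPower]
  constructor
  · rintro ⟨hne, hnadj⟩
    push Not at hnadj
    exact hnadj hne
  · rintro ⟨i, hne, hnadj⟩
    exact ⟨fun h => hne (congrFun h i), fun h => (h.2 i).elim hne hnadj⟩

def strongPowerComplHom {V W : Type*} {G : SimpleGraph V} {H : SimpleGraph W} (f : Gᶜ →g Hᶜ)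
    (d : ℕ) : (strongPower G d)ᶜ →g (strongPower H d)ᶜ where
  toFun x i := f (x i)
  map_rel' h := by
    obtain ⟨i, hi⟩ := (strongPower_compl_adj_iff G).1 h
    exact (strongPower_compl_adj_iff H).2 ⟨i, f.map_adj hi⟩

theorem alpha_strongPower_le_of_compl_hom {V W : Type*} [Fintype V] [Fintype W]
    {G : SimpleGraph V} {H : SimpleGraph W} (f : Gᶜ →g Hᶜ) (d : ℕ) :
    alpha (strongPower G d) ≤ alpha (strongPower H d) := by
  simpa only [alpha_eq_indepNum] using
    SimpleGraph.indepNum_le_of_compl_hom (strongPowerComplHom f d)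

theorem alpha_strongPower_rpow_le_card {W : Type*} [Fintype W] (H : SimpleGraph W) (d : ℕ+) :
    (alpha (strongPower H d) : ℝ) ^ ((1 : ℝ) / d) ≤ Fintype.card W := by
  have hcard : (alpha (strongPower H d) : ℝ) ≤ (Fintype.card W : ℝ) ^ (d : ℕ) := by
    have := (strongPower H d).indepNum_le_card
    rw [Fintype.card_fun, Fintype.card_fin] at this
    rw [alpha_eq_indepNum]
    exact_mod_cast this
  calc (alpha (strongPower H d) : ℝ) ^ ((1 : ℝ) / d)
      ≤ ((Fintype.card W : ℝ) ^ (d : ℕ)) ^ ((d : ℕ)⁻¹ : ℝ) := by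
        rw [one_div]
        exact Real.rpow_le_rpow (by positivity) hcard (by positivity)
    _ = Fintype.card W := Real.pow_rpow_inv_natCast (by positivity) d.ne_zero

theorem shannonCapacity_le_of_alpha_le {V W : Type*} [Fintype V] [Fintype W]
    {G : SimpleGraph V} {H : SimpleGraph W}
    (h : ∀ d : ℕ, alpha (strongPower G d) ≤ alpha (strongPower H d)) :
    shannonCapacity G ≤ shannonCapacity H := by
  have hbdd : BddAbove (Set.range fun d : ℕ+ =>
      (alpha (strongPower H d) : ℝ) ^ ((1 : ℝ) / d)) :=
    ⟨Fintype.card W, Set.forall_mem_range.2 (alpha_strongPower_rpow_le_card H)⟩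
  refine ciSup_le fun d => le_ciSup_of_le hbdd d ?_
  exact Real.rpow_le_rpow (by positivity) (by exact_mod_cast h d) (by positivity)

theorem stmt17 {V W : Type*} [Fintype V] [Fintype W] (G : SimpleGraph V) (H : SimpleGraph W)
    (f : Gᶜ →g Hᶜ) :
    (∀ d : ℕ, 0 < d → alpha (strongPower G d) ≤ alpha (strongPower H d)) ∧
    shannonCapacity G ≤ shannonCapacity H :=
  ⟨fun d _ => alpha_strongPower_le_of_compl_hom f d,
    shannonCapacity_le_of_alpha_le (alpha_strongPower_le_of_compl_hom f)⟩
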